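/- arXiv:1102.2247 — 2 statements merged into one kernel-verified Lean document; each statement's English description precedes it below -/
import Mathlib

section
/- For a Thurston map f with postcritical set P_f, the orbifold Euler characteristic χ(S²,N_f) = 2 − Σ_{x∈P_f}(1 − 1/N_f(x)) satisfies χ(S²,N_f) ≤ 0. -/
/-- `orbInv m` is `1/m` with the convention `1/∞ = 0`. -/
noncomputable def orbInv (m : ℕ∞) : ℝ := ((m : ENNReal)⁻¹).toReal

/-!
Let `B = f⁻¹(P)`; it contains `P` (which is forward invariant) and the critical set `Ω`.
Since `deg_x f · N x ∣ N (f x)`, every point satisfies the local inequality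
`(1 - 1/N x) + (deg_x f - 1) ≤ deg_x f · (1 - 1/N (f x))`.
Summed over `B`, the left side is `(2 - χ) + (2d - 2)`, by Riemann–Hurwitz and because `N = 1`
off `P`; the right side is `d (2 - χ)`, because every fibre has total degree `d`.
Hence `d χ ≤ χ`, and `χ ≤ 0` since `d ≥ 2`.
-/

lemma orbInv_one : orbInv 1 = 1 := by simp [orbInv]

lemma natCast_mul_orbInv_le_of_dvd {k : ℕ} {a b : ℕ∞} (h : (k : ℕ∞) * a ∣ b) :
    k * orbInv b ≤ orbInv a := by
  rcases eq_or_ne b 0 with rfl | hb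
  · simp [orbInv]
  obtain ⟨c, rfl⟩ := h
  obtain ⟨⟨hk, ha⟩, hc⟩ := (mul_ne_zero_iff.mp hb).imp_left mul_ne_zero_iff.mp
  have hkR : (k : ENNReal) ≠ 0 := by exact_mod_cast hk
  have hle : (k : ENNReal) * a ≤ ((k * a * c : ℕ∞) : ENNReal) := by
    push_cast
    exact le_mul_of_one_le_right' (by exact_mod_cast Order.one_le_iff_ne_zero.mpr hc)
  have hinv : (k : ENNReal) * ((k * a * c : ℕ∞) : ENNReal)⁻¹ ≤ (a : ENNReal)⁻¹ := by
    calc (k : ENNReal) * ((k * a * c : ℕ∞) : ENNReal)⁻¹ ≤ k * ((k : ENNReal) * a)⁻¹ := by gcongr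
      _ = (a : ENNReal)⁻¹ := by
        rw [ENNReal.mul_inv (.inl hkR) (.inl (ENNReal.natCast_ne_top k)), ← mul_assoc,
          ENNReal.mul_inv_cancel hkR (ENNReal.natCast_ne_top k), one_mul]
  have hfin : (a : ENNReal)⁻¹ ≠ ⊤ := ENNReal.inv_ne_top.mpr (by exact_mod_cast ha)
  simpa [orbInv, ENNReal.toReal_mul] using ENNReal.toReal_mono hfin hinv

lemma one_sub_orbInv_add_le {k : ℕ} {a b : ℕ∞} (h : (k : ℕ∞) * a ∣ b) :
    (1 - orbInv a) + ((k : ℝ) - 1) ≤ k * (1 - orbInv b) := by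
  have := natCast_mul_orbInv_le_of_dvd h
  rw [mul_sub, mul_one]
  linarith

lemma sum_sub_one_eq_of_subset {X : Type*} {locdeg : X → ℕ} (hloc : ∀ x, 1 ≤ locdeg x)
    {Ω B : Finset X} (hΩ : ∀ x, x ∈ Ω ↔ 2 ≤ locdeg x) (hB : Ω ⊆ B) :
    ∑ x ∈ B, ((locdeg x : ℝ) - 1) = ((∑ x ∈ Ω, (locdeg x - 1) : ℕ) : ℝ) := by
  rw [← Finset.sum_subset hB fun x _ hx => by
    rw [show locdeg x = 1 by have := (hΩ x).not.mp hx; have := hloc x; omega]; simp]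
  push_cast [Nat.cast_sub (hloc _)]
  rfl

section Fibres

variable {X : Type*} [DecidableEq X] {f : X → X} {fiber : X → Finset X}

lemma subset_biUnion_fiber (hfiber : ∀ y x, x ∈ fiber y ↔ f x = y) {s t : Finset X}
    (hst : ∀ x ∈ s, f x ∈ t) : s ⊆ t.biUnion fiber := fun x hx =>
  Finset.mem_biUnion.mpr ⟨f x, hst x hx, (hfiber _ x).mpr rfl⟩

lemma sum_biUnion_fiber_mul_comp (hfiber : ∀ y x, x ∈ fiber y ↔ f x = y) {locdeg : X → ℕ}
    {d : ℕ} (hdeg : ∀ y, ∑ x ∈ fiber y, locdeg x = d) (t : Finset X) (g : X → ℝ) :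
    ∑ x ∈ t.biUnion fiber, (locdeg x : ℝ) * g (f x) = d * ∑ y ∈ t, g y := by
  have hdisj : (t : Set X).PairwiseDisjoint fiber := fun y₁ _ y₂ _ hne =>
    Finset.disjoint_left.mpr fun x h₁ h₂ =>
      hne (((hfiber _ x).mp h₁).symm.trans ((hfiber _ x).mp h₂))
  rw [Finset.sum_biUnion hdisj, Finset.mul_sum]
  refine Finset.sum_congr rfl fun y _ => ?_
  calc ∑ x ∈ fiber y, (locdeg x : ℝ) * g (f x) = ∑ x ∈ fiber y, (locdeg x : ℝ) * g y :=
        Finset.sum_congr rfl fun x hx => by rw [(hfiber y x).mp hx]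
    _ = d * g y := by rw [← Finset.sum_mul, ← Nat.cast_sum, hdeg]

end Fibres

theorem orbifold_euler_char_nonpos_general {X : Type*} (f : X → X) (d : ℕ) (hd : 2 ≤ d)
    (locdeg : X → ℕ) (hloc : ∀ x, 1 ≤ locdeg x)
    (Ω : Finset X) (hΩ : ∀ x, x ∈ Ω ↔ 2 ≤ locdeg x)
    (hRH : ∑ x ∈ Ω, (locdeg x - 1) = 2 * d - 2)
    (fiber : X → Finset X) (hfiber : ∀ y x, x ∈ fiber y ↔ f x = y)
    (hdeg : ∀ y, ∑ x ∈ fiber y, locdeg x = d)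
    (P : Finset X)
    (hP : ∀ x, x ∈ P ↔ ∃ c ∈ Ω, ∃ n : ℕ, 1 ≤ n ∧ f^[n] c = x)
    (N : X → ℕ∞)
    (hN1 : ∀ x, x ∉ P → N x = 1)
    (hcomp : ∀ x, (locdeg x : ℕ∞) * N x ∣ N (f x)) :
    2 - ∑ x ∈ P, (1 - orbInv (N x)) ≤ 0 := by
  classical
  have hfP : ∀ x ∈ P, f x ∈ P := fun x hx => by
    obtain ⟨c, hc, n, hn, rfl⟩ := (hP x).mp hx
    exact (hP _).mpr ⟨c, hc, n + 1, by omega, Function.iterate_succ_apply' f n c⟩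
  have hfΩ : ∀ c ∈ Ω, f c ∈ P := fun c hc => (hP _).mpr ⟨c, hc, 1, le_rfl, rfl⟩
  set B := P.biUnion fiber
  have hχ : ∑ x ∈ P, (1 - orbInv (N x)) = ∑ x ∈ B, (1 - orbInv (N x)) :=
    Finset.sum_subset (subset_biUnion_fiber hfiber hfP) fun x _ hx => by
      rw [hN1 x hx, orbInv_one, sub_self]
  have hRH' : ∑ x ∈ B, ((locdeg x : ℝ) - 1) = 2 * d - 2 := by
    rw [sum_sub_one_eq_of_subset hloc hΩ (subset_biUnion_fiber hfiber hfΩ), hRH,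
      Nat.cast_sub (by omega)]
    push_cast
    ring
  have hlocal : ∑ x ∈ B, ((1 - orbInv (N x)) + ((locdeg x : ℝ) - 1))
      ≤ ∑ x ∈ B, (locdeg x : ℝ) * (1 - orbInv (N (f x))) :=
    Finset.sum_le_sum fun x _ => one_sub_orbInv_add_le (hcomp x)
  rw [Finset.sum_add_distrib, ← hχ, hRH',
    sum_biUnion_fiber_mul_comp hfiber hdeg P fun y => 1 - orbInv (N y)] at hlocal
  have hd' : (2 : ℝ) ≤ d := by exact_mod_cast hd
  nlinarith

/-- for a Thurston map `f` (an orientation-preserving branched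
self-covering of `S²` of degree `d ≥ 2` with finite postcritical set `P`),
the orbifold Euler characteristic
`χ(S², N_f) = 2 - Σ_{x ∈ P} (1 - 1/N_f(x))` is nonpositive.

The branched-covering structure is encoded combinatorially:
`locdeg x` is the local degree of `f` at `x`, `Ω` the critical set,
`hRH` is the Riemann–Hurwitz relation, `hdeg` says local degrees over each
fiber sum to `d`, `P` is the postcritical set `⋃_{n ≥ 1} f^n(Ω)`, and
`N : X → ℕ∞` is the orbifold multiplicity function of `f`:
`N ≡ 1` off `P`, each `N x ≥ 1`, and `deg_x(f)·N(x)` divides `N(f(x))`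
(the defining property of `N_f` as the lcm of local degrees of iterates,
with value `∞` on cycles containing a critical point). -/
theorem orbifold_euler_char_nonpos {X : Type*} (f : X → X) (d : ℕ) (hd : 2 ≤ d)
    (locdeg : X → ℕ) (hloc : ∀ x, 1 ≤ locdeg x)
    (Ω : Finset X) (hΩ : ∀ x, x ∈ Ω ↔ 2 ≤ locdeg x)
    (hRH : ∑ x ∈ Ω, (locdeg x - 1) = 2 * d - 2)
    (fiber : X → Finset X) (hfiber : ∀ y x, x ∈ fiber y ↔ f x = y)
    (hdeg : ∀ y, ∑ x ∈ fiber y, locdeg x = d)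
    (P : Finset X)
    (hP : ∀ x, x ∈ P ↔ ∃ c ∈ Ω, ∃ n : ℕ, 1 ≤ n ∧ f^[n] c = x)
    (N : X → ℕ∞)
    (hN1 : ∀ x, x ∉ P → N x = 1)
    (hNpos : ∀ x, 1 ≤ N x)
    (hNinf : ∀ x ∈ P, (∃ n : ℕ, 1 ≤ n ∧ f^[n] x = x ∧ ∃ k ≤ n, f^[k] x ∈ Ω) →
      N x = ⊤)
    (hcomp : ∀ x, (locdeg x : ℕ∞) * N x ∣ N (f x)) :
    2 - ∑ x ∈ P, (1 - orbInv (N x)) ≤ 0 :=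
  orbifold_euler_char_nonpos_general f d hd locdeg hloc Ω hΩ hRH fiber hfiber hdeg P hP N hN1 hcomp
end

section
/- Every square matrix with nonnegative real entries has a real nonnegative eigenvalue λ equal to its spectral radius (the Perron–Frobenius leading eigenvalue). -/
/-!
Let `μ` be an eigenvalue of maximal modulus `ρ = ‖μ‖`, with eigenvector `v`, and let `x = |v|`
entrywise; the triangle inequality gives `ρ x ≤ A x`. For `0 ≤ s < 1/ρ` the Neumann series
`(1 - s A)⁻¹ = ∑ sᵏ Aᵏ` converges, because `s ↦ (1 - s A)⁻¹` is holomorphic on the disc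
`|s| < 1/ρ`; hence `(1 - s A)⁻¹` has nonnegative entries. If `ρ` were not in the spectrum,
continuity of the inverse would carry this to `N = (1 - A/ρ)⁻¹`, and then `x = N (1 - A/ρ) x ≤ 0`
would force `v = 0`.

Complex entries are compared in `ComplexOrder`, where `0 ≤ z` means that `z` is a nonnegative real.
-/

open scoped ENNReal ComplexOrder

theorem spectrum.hasSum_inverse_one_sub_smul {A : Type*} [NormedRing A] [NormedAlgebra ℂ A]
    [CompleteSpace A] (a : A) {z : ℂ} (hz : (‖z‖₊ : ℝ≥0∞) < (spectralRadius ℂ a)⁻¹) :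
    HasSum (fun n => z ^ n • a ^ n) (Ring.inverse (1 - z • a)) := by
  obtain ⟨r, hzr, hr⟩ := ENNReal.lt_iff_exists_nnreal_btwn.mp hz
  have hr0 : 0 < r := lt_of_le_of_lt bot_le (ENNReal.coe_lt_coe.mp hzr)
  have hcauchy := (differentiableOn_inverse_one_sub_smul hr).hasFPowerSeriesOnBall hr0
  have hgeom := (hasFPowerSeriesOnBall_inverse_one_sub_smul ℂ a).exchange_radius hcauchy
  simpa [ContinuousMultilinearMap.mkPiRing_apply] using
    hgeom.hasSum (y := z) (by simpa [Metric.eball, edist_zero_right] using hzr)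

namespace Matrix

variable {ι : Type*} [Fintype ι]

theorem ofReal_norm_mul_le_mulVec_norm {A : Matrix ι ι ℂ} (hA : ∀ i j, 0 ≤ A i j) {μ : ℂ}
    {v : ι → ℂ} (hv : A *ᵥ v = μ • v) (i : ι) :
    (‖μ‖ : ℂ) * ‖v i‖ ≤ (A *ᵥ fun j => (‖v j‖ : ℂ)) i := by
  calc (‖μ‖ : ℂ) * ‖v i‖ = ((‖(A *ᵥ v) i‖ : ℝ) : ℂ) := by simp [hv]
    _ ≤ ((∑ j, ‖A i j‖ * ‖v j‖ : ℝ) : ℂ) := Complex.real_le_real.mpr <| by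
      simpa [mulVec, dotProduct, norm_mul] using norm_sum_le Finset.univ fun j => A i j * v j
    _ = (A *ᵥ fun j => (‖v j‖ : ℂ)) i := by
      simp [mulVec, dotProduct, Complex.norm_of_nonneg' (hA i _)]

variable [DecidableEq ι]

theorem nonpos_of_mulVec_nonpos {R : Type*} [Semiring R] [PartialOrder R] [IsOrderedRing R]
    {N B : Matrix ι ι R} (hN : ∀ i j, 0 ≤ N i j) (hNB : N * B = 1) {x : ι → R}
    (hBx : B *ᵥ x ≤ 0) : x ≤ 0 := by
  intro i
  rw [← one_mulVec x, ← hNB, ← mulVec_mulVec]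
  exact Finset.sum_nonpos fun j _ => mul_nonpos_of_nonneg_of_nonpos (hN i j) (hBx j)

section LinftyOpNorm

attribute [local instance] Matrix.linftyOpNormedRing Matrix.linftyOpNormedAlgebra

theorem exists_nnnorm_eq_spectralRadius [Nonempty ι] (A : Matrix ι ι ℂ) :
    ∃ μ ∈ spectrum ℂ A, (‖μ‖₊ : ℝ≥0∞) = spectralRadius ℂ A :=
  spectrum.exists_nnnorm_eq_spectralRadius A

theorem inverse_one_sub_smul_apply_nonneg_of_lt {A : Matrix ι ι ℂ} (hA : ∀ i j, 0 ≤ A i j)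
    {z : ℂ} (hz : 0 ≤ z) (hzA : (‖z‖₊ : ℝ≥0∞) < (spectralRadius ℂ A)⁻¹) (i j : ι) :
    0 ≤ Ring.inverse (1 - z • A) i j := by
  have hsum := Pi.hasSum.mp (Pi.hasSum.mp (spectrum.hasSum_inverse_one_sub_smul A hzA) i) j
  exact hsum.nonneg fun k => mul_nonneg (pow_nonneg hz k) (pow_apply_nonneg hA k i j)

theorem inverse_one_sub_smul_apply_nonneg {A : Matrix ι ι ℂ} (hA : ∀ i j, 0 ≤ A i j) {s : ℝ}
    (hs : 0 < s) (hsA : (‖(s : ℂ)‖₊ : ℝ≥0∞) ≤ (spectralRadius ℂ A)⁻¹)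
    (hu : IsUnit (1 - (s : ℂ) • A)) (i j : ι) :
    0 ≤ Ring.inverse (1 - (s : ℂ) • A) i j := by
  have hcont : ContinuousAt (fun u : ℝ => Ring.inverse (1 - (u : ℂ) • A) i j) s := by
    have hinv := NormedRing.inverse_continuousAt hu.unit
    rw [hu.unit_spec] at hinv
    exact ((continuous_apply j).comp (continuous_apply i)).continuousAt.comp
      (hinv.comp (f := fun u : ℝ => 1 - (u : ℂ) • A) (by fun_prop))
  refine ge_of_tendsto (hcont.tendsto.mono_left (nhdsWithin_le_nhds (s := Set.Iio s))) ?_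
  filter_upwards [Ioo_mem_nhdsLT hs] with u hu
  refine inverse_one_sub_smul_apply_nonneg_of_lt hA (Complex.zero_le_real.mpr hu.1.le)
    (lt_of_lt_of_le ?_ hsA) i j
  have : ‖(u : ℂ)‖ < ‖(s : ℂ)‖ := by
    simpa [Complex.norm_real, abs_of_pos hu.1, abs_of_pos hs] using hu.2
  exact_mod_cast this

end LinftyOpNorm

theorem ofReal_norm_mem_spectrum_of_nonneg {A : Matrix ι ι ℂ} (hA : ∀ i j, 0 ≤ A i j) {μ : ℂ}
    (hμ : μ ∈ spectrum ℂ A) (hμA : (‖μ‖₊ : ℝ≥0∞) = spectralRadius ℂ A) :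
    (‖μ‖ : ℂ) ∈ spectrum ℂ A := by
  rcases (norm_nonneg μ).eq_or_lt with hμ0 | hμ0
  · rwa [← hμ0, Complex.ofReal_zero, ← norm_eq_zero.mp hμ0.symm]
  by_contra hnot
  obtain ⟨v, hv⟩ := (Module.End.hasEigenvalue_iff_mem_spectrum.mpr
    ((spectrum_toLin' A).symm ▸ hμ)).exists_hasEigenvector
  set x : ι → ℂ := fun j => (‖v j‖ : ℂ)
  have hunit : IsUnit (1 - ((‖μ‖⁻¹ : ℝ) : ℂ) • A) := by
    have h := spectrum.notMem_iff.mp hnot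
    rw [Algebra.algebraMap_eq_smul_one] at h
    have hne : (‖μ‖ : ℂ) ≠ 0 := Complex.ofReal_ne_zero.mpr hμ0.ne'
    simpa [Units.smul_def] using (IsUnit.smul_sub_iff_sub_inv_smul (Units.mk0 _ hne) A).mp h
  have hsA : (‖((‖μ‖⁻¹ : ℝ) : ℂ)‖₊ : ℝ≥0∞) ≤ (spectralRadius ℂ A)⁻¹ := by
    rw [← hμA, ← ENNReal.coe_inv (nnnorm_ne_zero_iff.mpr (norm_pos_iff.mp hμ0))]
    exact_mod_cast le_of_eq (by ext; simp)
  have hN := inverse_one_sub_smul_apply_nonneg hA (inv_pos.mpr hμ0) hsA hunit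
  have hx : x ≤ 0 := nonpos_of_mulVec_nonpos hN (Ring.inverse_mul_cancel _ hunit) fun i => by
    have h := ofReal_norm_mul_le_mulVec_norm hA hv.apply_eq_smul i
    have hρ : (0 : ℂ) ≤ ((‖μ‖⁻¹ : ℝ) : ℂ) := Complex.zero_le_real.mpr (inv_nonneg.mpr hμ0.le)
    have := mul_le_mul_of_nonneg_left h hρ
    rw [← mul_assoc, ← Complex.ofReal_mul, inv_mul_cancel₀ hμ0.ne', Complex.ofReal_one,
      one_mul] at this
    simpa [sub_mulVec, smul_mulVec, x] using this
  exact hv.2 <| funext fun i => by simpa [x] using le_antisymm (hx i) (by simp [x])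

end Matrix

/-- every square matrix with nonnegative real entries has a real
nonnegative eigenvalue `λ` equal to its spectral radius (the Perron–Frobenius
leading eigenvalue): `λ` is an eigenvalue of `M` (i.e. belongs to the spectrum
of `M` viewed as a complex matrix), `λ ≥ 0`, and every complex eigenvalue `μ`
satisfies `‖μ‖ ≤ λ`. -/
theorem nonneg_matrix_has_perron_eigenvalue {n : ℕ} (hn : 0 < n)
    (M : Matrix (Fin n) (Fin n) ℝ) (hM : ∀ i j, 0 ≤ M i j) :
    ∃ lam : ℝ, 0 ≤ lam ∧
      (lam : ℂ) ∈ spectrum ℂ (M.map (Complex.ofReal)) ∧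
      ∀ μ ∈ spectrum ℂ (M.map (Complex.ofReal)), ‖μ‖ ≤ lam := by
  have : Nonempty (Fin n) := ⟨⟨0, hn⟩⟩
  have hA : ∀ i j, 0 ≤ M.map Complex.ofReal i j := fun i j => Complex.zero_le_real.mpr (hM i j)
  obtain ⟨μ, hμ, hμA⟩ := (M.map Complex.ofReal).exists_nnnorm_eq_spectralRadius
  refine ⟨‖μ‖, norm_nonneg μ, Matrix.ofReal_norm_mem_spectrum_of_nonneg hA hμ hμA, ?_⟩
  intro ν hν
  have h : (‖ν‖₊ : ℝ≥0∞) ≤ ‖μ‖₊ := hμA ▸ le_iSup₂ (α := ℝ≥0∞) ν hν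
  exact_mod_cast h
end
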